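/- Let P be a row-stochastic matrix on a finite set S whose closed communicating classes C_1, …, C_m cover S (i.e., S = C_1 ∪ … ∪ C_m, so there are no transient states). Let Q be a row-stochastic matrix on S and define the m × m matrix Γ by Γ(k,l) := (1/|C_k|) Σ_{x∈C_k} Σ_{y∈C_l} Q(x,y). If Γ is irreducible, then for every ε ∈ (0,1) the matrix P_ε := (1−ε)P + εQ is irreducible. -/

import Mathlib

open Filter Topology

def RowStochastic {S : Type*} [Fintype S] (P : Matrix S S ℝ) : Prop :=
  (∀ i j, 0 ≤ P i j) ∧ ∀ i, ∑ j, P i j = 1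

def StationaryDist {S : Type*} [Fintype S] (P : Matrix S S ℝ) (π : S → ℝ) : Prop :=
  (∀ i, 0 ≤ π i) ∧ (∑ i, π i = 1) ∧ ∀ j, ∑ i, π i * P i j = π j

def MatIrreducible {S : Type*} [Fintype S] [DecidableEq S] (P : Matrix S S ℝ) : Prop :=
  ∀ i j, ∃ k, 1 ≤ k ∧ 0 < (P ^ k) i j

def ClosedClass {S : Type*} [Fintype S] [DecidableEq S] (P : Matrix S S ℝ) (C : Set S) : Prop :=
  C.Nonempty ∧ (∀ i ∈ C, ∀ j, j ∉ C → P i j = 0) ∧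
    ∀ i ∈ C, ∀ j ∈ C, ∃ k, 1 ≤ k ∧ 0 < (P ^ k) i j

/-! The positive entries of `P_ε` are those of `P` together with those of `Q`. Inside each
class `C_k` the matrix `P` already connects any two states, and `Γ(k,l) > 0` means that `Q` has a
positive entry from some state of `C_k` to some state of `C_l`. So every path of positive entries
of `Γ` between classes lifts to a path of positive entries of `P_ε` between any of their states,
and a path of positive entries of length `n` is the same as a positive entry of the `n`-th power
of a nonnegative matrix. -/

open Relation

theorem Relation.TransGen.of_transGen_blocks {S ι : Type*} {r : S → S → Prop}
    {s : ι → ι → Prop} {C : ι → Set S} (hne : ∀ k, (C k).Nonempty)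
    (hconn : ∀ k, ∀ a ∈ C k, ∀ b ∈ C k, ReflTransGen r a b)
    (hstep : ∀ k l, s k l → ∃ x ∈ C k, ∃ y ∈ C l, r x y) {k l : ι}
    (hkl : TransGen s k l) :
    ∀ a ∈ C k, ∀ b ∈ C l, TransGen r a b := by
  have hlift : ∀ k l, s k l → ∀ a ∈ C k, ∀ b ∈ C l, TransGen r a b := by
    intro k l hkl a ha b hb
    obtain ⟨x, hx, y, hy, hxy⟩ := hstep k l hkl
    exact (TransGen.tail' (hconn k a ha x hx) hxy).trans_left (hconn l y hy b hb)
  induction hkl with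
  | single h => exact hlift _ _ h
  | @tail m l _ hml ih =>
    intro a ha b hb
    obtain ⟨z, hz⟩ := hne m
    exact (ih a ha z hz).trans (hlift m l hml z hz b hb)

section Nonneg

variable {S : Type*} [Fintype S] [DecidableEq S] {A : Matrix S S ℝ}

theorem Matrix.pow_succ_apply_pos_iff (hA : ∀ i j, 0 ≤ A i j) (k : ℕ) (i j : S) :
    0 < (A ^ (k + 1)) i j ↔ ∃ x, 0 < (A ^ k) i x ∧ 0 < A x j := by
  have hterm (x : S) : 0 ≤ (A ^ k) i x * A x j :=
    mul_nonneg (Matrix.pow_apply_nonneg hA k i x) (hA x j)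
  rw [pow_succ, Matrix.mul_apply, Finset.sum_pos_iff_of_nonneg fun x _ => hterm x]
  refine exists_congr fun x =>
    ⟨fun ⟨_, h⟩ => ?_, fun ⟨h₁, h₂⟩ => ⟨Finset.mem_univ x, mul_pos h₁ h₂⟩⟩
  exact ⟨pos_of_mul_pos_left h (hA x j),
    pos_of_mul_pos_right h (Matrix.pow_apply_nonneg hA k i x)⟩

theorem Matrix.exists_pow_apply_pos_iff_transGen (hA : ∀ i j, 0 ≤ A i j) (i j : S) :
    (∃ k, 1 ≤ k ∧ 0 < (A ^ k) i j) ↔ TransGen (fun a b => 0 < A a b) i j := by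
  constructor
  · rintro ⟨k, hk, hpos⟩
    obtain ⟨n, rfl⟩ := Nat.exists_eq_add_of_le' hk
    induction n generalizing j with
    | zero => exact .single (by simpa using hpos)
    | succ n ih =>
      obtain ⟨x, hix, hxj⟩ := (Matrix.pow_succ_apply_pos_iff hA _ i j).1 hpos
      exact (ih x (by omega) hix).tail hxj
  · intro h
    induction h with
    | single h => exact ⟨1, le_rfl, by simpa using h⟩
    | tail _ hbc ih =>
      obtain ⟨k, -, hk⟩ := ih
      exact ⟨k + 1, by omega, (Matrix.pow_succ_apply_pos_iff hA k i _).2 ⟨_, hk, hbc⟩⟩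

theorem matIrreducible_iff_transGen (hA : ∀ i j, 0 ≤ A i j) :
    MatIrreducible A ↔ ∀ i j, TransGen (fun a b => 0 < A a b) i j :=
  forall₂_congr fun i j => Matrix.exists_pow_apply_pos_iff_transGen hA i j

end Nonneg

theorem exists_pos_of_pos_mul_sum_sum {S : Type*} {Q : S → S → ℝ} (hQ : ∀ x y, 0 ≤ Q x y)
    {c : ℝ} (hc : 0 ≤ c) {s t : Finset S} (h : 0 < c * ∑ x ∈ s, ∑ y ∈ t, Q x y) :
    ∃ x ∈ s, ∃ y ∈ t, 0 < Q x y := by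
  have hsum := pos_of_mul_pos_right h hc
  rw [Finset.sum_pos_iff_of_nonneg fun x _ => Finset.sum_nonneg fun y _ => hQ x y] at hsum
  obtain ⟨x, hx, hxt⟩ := hsum
  rw [Finset.sum_pos_iff_of_nonneg fun y _ => hQ x y] at hxt
  exact ⟨x, hx, hxt⟩

section ConvexCombination

variable {S : Type*} {P Q : Matrix S S ℝ} {ε : ℝ}

theorem convexComb_apply_nonneg (hP : ∀ i j, 0 ≤ P i j) (hQ : ∀ i j, 0 ≤ Q i j)
    (hε : ε ∈ Set.Ioo (0 : ℝ) 1) (a b : S) : 0 ≤ ((1 - ε) • P + ε • Q) a b := by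
  simp only [Matrix.add_apply, Matrix.smul_apply, smul_eq_mul]
  nlinarith [hP a b, hQ a b, hε.1, hε.2]

theorem convexComb_apply_pos_iff (hP : ∀ i j, 0 ≤ P i j) (hQ : ∀ i j, 0 ≤ Q i j)
    (hε : ε ∈ Set.Ioo (0 : ℝ) 1) (a b : S) :
    0 < ((1 - ε) • P + ε • Q) a b ↔ 0 < P a b ∨ 0 < Q a b := by
  simp only [Matrix.add_apply, Matrix.smul_apply, smul_eq_mul]
  have := hP a b; have := hQ a b; have := hε.1; have := hε.2
  constructor
  · contrapose!
    rintro ⟨hPab, hQab⟩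
    nlinarith
  · rintro (h | h) <;> nlinarith

end ConvexCombination

theorem pagerank_perturbed_irreducible
    {S : Type*} [Fintype S] [DecidableEq S]
    (P : Matrix S S ℝ) (hP : RowStochastic P)
    (m : ℕ) (C : Fin m → Finset S)
    (hCcls : ∀ k, ClosedClass P (C k : Set S))
    (hcover : ∀ v : S, ∃ k, v ∈ C k)
    (Q : Matrix S S ℝ) (hQ : RowStochastic Q)
    (Γ : Matrix (Fin m) (Fin m) ℝ)
    (hΓdef : ∀ k l, Γ k l = (1 / ((C k).card : ℝ)) * ∑ x ∈ C k, ∑ y ∈ C l, Q x y)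
    (hΓirr : MatIrreducible Γ) :
    ∀ ε ∈ Set.Ioo (0 : ℝ) 1, MatIrreducible ((1 - ε) • P + ε • Q) := by
  intro ε hε
  set M := (1 - ε) • P + ε • Q
  have hMpos (a b : S) : 0 < M a b ↔ 0 < P a b ∨ 0 < Q a b :=
    convexComb_apply_pos_iff hP.1 hQ.1 hε a b
  have hΓnn (k l : Fin m) : 0 ≤ Γ k l :=
    hΓdef k l ▸ mul_nonneg (by positivity) (Finset.sum_nonneg fun x _ =>
      Finset.sum_nonneg fun y _ => hQ.1 x y)
  have hconn (k : Fin m) (a : S) (ha : a ∈ C k) (b : S) (hb : b ∈ C k) :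
      ReflTransGen (fun a b => 0 < M a b) a b := by
    have hPab := (Matrix.exists_pow_apply_pos_iff_transGen hP.1 a b).1 ((hCcls k).2.2 a ha b hb)
    exact (TransGen.mono (fun x y h => (hMpos x y).2 (.inl h)) a b hPab).to_reflTransGen
  have hstep (k l : Fin m) (h : 0 < Γ k l) : ∃ x ∈ C k, ∃ y ∈ C l, 0 < M x y := by
    obtain ⟨x, hx, y, hy, hxy⟩ := exists_pos_of_pos_mul_sum_sum hQ.1 (by positivity)
      (hΓdef k l ▸ h)
    exact ⟨x, hx, y, hy, (hMpos x y).2 (.inr hxy)⟩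
  rw [matIrreducible_iff_transGen hΓnn] at hΓirr
  rw [matIrreducible_iff_transGen (convexComb_apply_nonneg hP.1 hQ.1 hε)]
  intro i j
  obtain ⟨k, hk⟩ := hcover i
  obtain ⟨l, hl⟩ := hcover j
  exact (hΓirr k l).of_transGen_blocks (fun k => (hCcls k).1) hconn hstep i hk j hl
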